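/- arXiv:1705.08562 — 5 statements merged into one kernel-verified Lean document; each statement's English description precedes it below -/
import Mathlib

section
/- Let N ≥ 1, b ≥ 0 be integers, dist : Fin N → ℕ with dist i ≤ b for all i, and a : Fin N → Bool a binary affinity with N⁺ ≥ 1 positives. Then the average of AP(σ) over the finite nonempty set of all rankings σ compatible with dist equals the tie-aware closed form ∑_{d=0}^{b} (n_d⁺ / (n_d · N⁺)) · ∑_{t = N_{d−1}+1}^{N_d} ( N_{d−1}⁺ + (t − N_{d−1} − 1) · (n_d⁺ − 1)/(n_d − 1) + 1 ) / t, where all quantities are cast to ℝ, summands with n_d = 0 contribute 0, and when n_d = 1 the factor (t − N_{d−1} − 1) vanishes so the quotient (n_d⁺ − 1)/(n_d − 1) is immaterial. -/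
/-!
Let `σ₀ = Tuple.sort dist`. A ranking `σ` is compatible iff `dist ∘ σ = dist ∘ σ₀`, so the
compatible rankings are the translates `π * σ₀` by the permutations `π` preserving `dist`, and
each of them puts the items at distance `d` exactly at the ranks `N_{d-1}, …, N_d - 1`. These
permutations act transitively on ordered pairs of items with prescribed distances and prescribed
(in)equality, so for ranks `j, k` in the same tie block, counted over the compatible rankings,
`(σ j, σ k)` is uniformly distributed over the pairs it can take (`pairTargets`). Hence the mean
of `[a (σ k)]` is `n_d⁺ / n_d`, and for `j ≠ k` the mean of `[a (σ j)] [a (σ k)]` is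
`n_d⁺ (n_d⁺ - 1) / (n_d (n_d - 1))`, while the ranks before the block of `k` always hold exactly
`N_{d-1}⁺` positives. Linearity of the mean and regrouping the ranks `k = t - 1` by block give
the closed form.
-/

open Finset

section Counting

variable {α β : Type*} [DecidableEq α]

theorem Function.comp_swap_eq_self {f : α → β} {x y : α} (h : f x = f y) :
    f ∘ Equiv.swap x y = f := by
  rw [Equiv.comp_swap_eq_update, h, Function.update_eq_self, ← h, Function.update_eq_self]

theorem exists_perm_comp_eq_self_apply_eq_apply_eq (f : α → β) {x y x' y' : α}
    (hx : f x = f x') (hy : f y = f y') (hxy : x = y ↔ x' = y') :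
    ∃ π : Equiv.Perm α, f ∘ π = f ∧ π x = x' ∧ π y = y' := by
  set z := Equiv.swap x x' y
  have hz : f z = f y' := by
    rw [← hy, ← Function.comp_apply (f := f), Function.comp_swap_eq_self hx]
  refine ⟨Equiv.swap z y' * Equiv.swap x x', ?_, ?_, Equiv.swap_apply_left _ _⟩
  · rw [Equiv.Perm.coe_mul, ← Function.comp_assoc, Function.comp_swap_eq_self hz,
      Function.comp_swap_eq_self hx]
  · rw [Equiv.Perm.mul_apply, Equiv.swap_apply_left]
    by_cases h : x = y
    · subst h
      rw [show z = x' from Equiv.swap_apply_left _ _, hxy.mp rfl, Equiv.swap_self, Equiv.refl_apply]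
    · refine Equiv.swap_apply_of_ne_of_ne (fun h' => h ?_) (fun h' => h (hxy.mpr h'))
      exact (Equiv.swap x x').injective ((Equiv.swap_apply_left x x').trans h')

theorem card_filter_apply_pair_eq_of_mul_left_mem_iff {S : Finset (Equiv.Perm α)}
    {π : Equiv.Perm α} (hS : ∀ σ, π * σ ∈ S ↔ σ ∈ S) (j k : α) (p : α × α) :
    #{σ ∈ S | (σ j, σ k) = p} = #{σ ∈ S | (σ j, σ k) = (π p.1, π p.2)} := by
  apply card_nbij' (π * ·) (π⁻¹ * ·)
  · intro σ hσ
    simp_all [Prod.ext_iff]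
  · intro σ hσ
    simp_all [Prod.ext_iff, ← hS (π⁻¹ * σ)]
  · intro σ _; simp
  · intro σ _; simp

theorem card_filter_div_card_eq_of_card_fiber_eq {ι κ K : Type*} [DecidableEq κ] [Field K]
    [CharZero K] {s : Finset ι} {t : Finset κ} {F : ι → κ} (hF : ∀ i ∈ s, F i ∈ t)
    {c : ℕ} (hc : ∀ y ∈ t, #{i ∈ s | F i = y} = c) (hs : s.Nonempty)
    (q : κ → Prop) [DecidablePred q] :
    (#{i ∈ s | q (F i)} : K) / #s = #{y ∈ t | q y} / #t := by
  have card_s : #s = #t * c := (card_eq_sum_card_fiberwise hF).trans (sum_const_nat hc)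
  have card_filter : #{i ∈ s | q (F i)} = #{y ∈ t | q y} * c := by
    refine (card_eq_sum_card_fiberwise (f := F) (t := {y ∈ t | q y}) ?_).trans (sum_const_nat ?_)
    · intro i hi
      simp only [coe_filter, Set.mem_ofPred_eq] at hi ⊢
      exact ⟨hF i hi.1, hi.2⟩
    · intro y hy
      rw [filter_filter, ← hc y (mem_filter.mp hy).1]
      congr 1
      exact filter_congr fun i _ => ⟨fun h => h.2, fun h => ⟨h ▸ (mem_filter.mp hy).2, h⟩⟩
  have hc0 : (c : K) ≠ 0 := by
    have := hs.card_pos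
    rw [card_s] at this
    exact_mod_cast (Nat.pos_of_mul_pos_left this).ne'
  rw [card_s, card_filter, Nat.cast_mul, Nat.cast_mul, mul_div_mul_right _ _ hc0]

theorem card_filter_prod_self_eq_iff (s : Finset α) (P : Prop) [Decidable P] :
    #{p ∈ s ×ˢ s | p.1 = p.2 ↔ P} = if P then #s else #s * #s - #s := by
  split_ifs with hP
  · rw [← diag_card s, diag_eq_filter]; simp [hP]
  · rw [← offDiag_card s]; congr 1; ext; simp [hP, and_assoc]

theorem filter_filter_prod_self_eq_iff (s : Finset α) (P : Prop) [Decidable P]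
    (r : α → Prop) [DecidablePred r] :
    {p ∈ {p ∈ s ×ˢ s | p.1 = p.2 ↔ P} | r p.1 ∧ r p.2} =
      {p ∈ {i ∈ s | r i} ×ˢ {i ∈ s | r i} | p.1 = p.2 ↔ P} := by
  ext p; simp only [mem_filter, mem_product]; tauto

theorem Monotone.lt_iff_lt_card_filter_lt {N : ℕ} {γ : Type*} [LinearOrder γ] {g : Fin N → γ}
    (hg : Monotone g) (k : Fin N) (d : γ) : g k < d ↔ (k : ℕ) < #{j | g j < d} := by
  constructor
  · intro hk
    have : Iic k ⊆ ({j | g j < d} : Finset (Fin N)) := fun j hj => by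
      simpa using (hg (mem_Iic.mp hj)).trans_lt hk
    simpa using card_le_card this
  · intro hk
    by_contra! hk'
    have : ({j | g j < d} : Finset (Fin N)) ⊆ Iio k := fun j hj => by
      simpa using hg.reflect_lt ((mem_filter.mp hj).2.trans_le hk')
    simpa using (card_le_card this).trans_lt' hk

end Counting

theorem sum_range_card_filter_eq {α : Type*} (s : Finset α) (f : α → ℕ) (d : ℕ) :
    ∑ e ∈ range d, #{i ∈ s | f i = e} = #{i ∈ s | f i < d} := by
  rw [card_eq_sum_card_fiberwise (f := f) (t := range d)
    fun i hi => by simpa using (mem_filter.mp hi).2]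
  refine sum_congr rfl fun e he => ?_
  rw [filter_filter]
  exact congrArg card
    (filter_congr fun i _ => ⟨fun h => ⟨h ▸ mem_range.mp he, h⟩, And.right⟩)

namespace TieAwareAP

variable {N : ℕ} (dist : Fin N → ℕ) (a : Fin N → Bool)

def compatibleRankings : Finset (Equiv.Perm (Fin N)) :=
  univ.filter fun σ => Monotone fun k => dist (σ k)

def sortedDist : Fin N → ℕ := dist ∘ Tuple.sort dist

def bucket (d : ℕ) : Finset (Fin N) := {i | dist i = d}

def bucketSize (d : ℕ) : ℕ := #(bucket dist d)

def bucketPos (d : ℕ) : ℕ := #{i | dist i = d ∧ a i = true}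

def cumSize (d : ℕ) : ℕ := ∑ e ∈ range d, bucketSize dist e

def cumPos (d : ℕ) : ℕ := ∑ e ∈ range d, bucketPos dist a e

theorem cumSize_eq_card (d : ℕ) : cumSize dist d = #{i | dist i < d} :=
  sum_range_card_filter_eq _ _ _

theorem cumPos_eq_card (d : ℕ) : cumPos dist a d = #{i | dist i < d ∧ a i = true} := by
  have h := sum_range_card_filter_eq {i | a i = true} dist d
  simp only [filter_filter] at h
  simpa only [cumPos, bucketPos, and_comm] using h

theorem sortedDist_monotone : Monotone (sortedDist dist) := Tuple.monotone_sort dist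

variable {dist} in
theorem mem_compatibleRankings {σ : Equiv.Perm (Fin N)} :
    σ ∈ compatibleRankings dist ↔ dist ∘ σ = sortedDist dist := by
  rw [sortedDist, Tuple.comp_sort_eq_comp_iff_monotone]
  simp [compatibleRankings, Function.comp_def]

theorem sort_mem_compatibleRankings : Tuple.sort dist ∈ compatibleRankings dist :=
  mem_compatibleRankings.mpr rfl

variable {dist} in
theorem mul_mem_compatibleRankings_iff {π σ : Equiv.Perm (Fin N)} (hπ : dist ∘ π = dist) :
    π * σ ∈ compatibleRankings dist ↔ σ ∈ compatibleRankings dist := by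
  rw [mem_compatibleRankings, mem_compatibleRankings, Equiv.Perm.coe_mul,
    ← Function.comp_assoc, hπ]

theorem card_sortedDist_lt (d : ℕ) : #{k | sortedDist dist k < d} = cumSize dist d := by
  rw [cumSize_eq_card]
  exact card_equiv (Tuple.sort dist) (fun i => by simp only [mem_filter, mem_univ, true_and]; rfl)

theorem sortedDist_lt_iff (k : Fin N) (d : ℕ) :
    sortedDist dist k < d ↔ (k : ℕ) < cumSize dist d := by
  rw [(sortedDist_monotone dist).lt_iff_lt_card_filter_lt, card_sortedDist_lt]

theorem sortedDist_eq_iff (k : Fin N) (d : ℕ) :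
    sortedDist dist k = d ↔ cumSize dist d ≤ k ∧ (k : ℕ) < cumSize dist (d + 1) := by
  rw [← not_lt, ← sortedDist_lt_iff, ← sortedDist_lt_iff]
  omega

theorem cumSize_le (d : ℕ) : cumSize dist d ≤ N := by
  simpa [cumSize_eq_card] using card_filter_le univ fun i => dist i < d

def pairTargets (j k : Fin N) : Finset (Fin N × Fin N) :=
  {p ∈ bucket dist (sortedDist dist k) ×ˢ bucket dist (sortedDist dist k) | p.1 = p.2 ↔ j = k}

variable {dist} in
theorem apply_pair_mem_pairTargets {σ : Equiv.Perm (Fin N)} (hσ : σ ∈ compatibleRankings dist)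
    {j k : Fin N} (hjk : sortedDist dist j = sortedDist dist k) :
    (σ j, σ k) ∈ pairTargets dist j k := by
  have h := mem_compatibleRankings.mp hσ
  simp only [pairTargets, bucket, mem_filter, mem_product, mem_univ, true_and]
  refine ⟨⟨?_, ?_⟩, σ.injective.eq_iff⟩
  · rw [← hjk, ← h]; rfl
  · rw [← h]; rfl

theorem card_filter_apply_pair_eq_of_mem_pairTargets {j k : Fin N}
    (hjk : sortedDist dist j = sortedDist dist k) {p : Fin N × Fin N}
    (hp : p ∈ pairTargets dist j k) :
    #{σ ∈ compatibleRankings dist | (σ j, σ k) = p} =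
      #{σ ∈ compatibleRankings dist |
        (σ j, σ k) = (Tuple.sort dist j, Tuple.sort dist k)} := by
  have hτ := apply_pair_mem_pairTargets (sort_mem_compatibleRankings dist) hjk
  simp only [pairTargets, bucket, mem_filter, mem_product, mem_univ, true_and] at hp hτ
  obtain ⟨π, hπ, hπj, hπk⟩ := exists_perm_comp_eq_self_apply_eq_apply_eq dist
    (hτ.1.1.trans hp.1.1.symm) (hτ.1.2.trans hp.1.2.symm) (hτ.2.trans hp.2.symm)
  rw [card_filter_apply_pair_eq_of_mul_left_mem_iff
    (fun σ => mul_mem_compatibleRankings_iff hπ) j k (Tuple.sort dist j, Tuple.sort dist k),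
    hπj, hπk]

theorem sum_compatibleRankings_ite_mul_ite {j k : Fin N}
    (hjk : sortedDist dist j = sortedDist dist k) :
    ∑ σ ∈ compatibleRankings dist,
        (if a (σ j) = true then (1 : ℝ) else 0) * (if a (σ k) = true then (1 : ℝ) else 0) =
      #(compatibleRankings dist) *
        ((bucketPos dist a (sortedDist dist k) : ℝ) / bucketSize dist (sortedDist dist k)) *
        (if j = k then 1 else
          ((bucketPos dist a (sortedDist dist k) : ℝ) - 1) /
            (bucketSize dist (sortedDist dist k) - 1)) := by
  set s := bucket dist (sortedDist dist k)
  have key := card_filter_div_card_eq_of_card_fiber_eq (K := ℝ)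
    (fun σ hσ => apply_pair_mem_pairTargets hσ hjk)
    (fun p hp => card_filter_apply_pair_eq_of_mem_pairTargets dist hjk hp)
    ⟨_, sort_mem_compatibleRankings dist⟩ (fun p => a p.1 = true ∧ a p.2 = true)
  have card_s : #s = bucketSize dist (sortedDist dist k) := rfl
  have card_pos : #{i ∈ s | a i = true} = bucketPos dist a (sortedDist dist k) :=
    congrArg card (filter_filter _ _ _)
  rw [pairTargets, filter_filter_prod_self_eq_iff s (j = k) (fun i => a i = true),
    card_filter_prod_self_eq_iff, card_filter_prod_self_eq_iff, card_s, card_pos] at key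
  have hC : (#(compatibleRankings dist) : ℝ) ≠ 0 :=
    Nat.cast_ne_zero.mpr (card_ne_zero_of_mem (sort_mem_compatibleRankings dist))
  simp_rw [ite_zero_mul_ite_zero, one_mul]
  rw [sum_boole, (div_eq_iff hC).mp key, mul_comm, mul_assoc]
  congr 1
  split_ifs
  · rw [mul_one]
  · rw [Nat.cast_sub (Nat.le_mul_self _), Nat.cast_sub (Nat.le_mul_self _), div_mul_div_comm]
    push_cast
    ring_nf

theorem filter_Iic_sortedDist_lt (k : Fin N) :
    {j ∈ Iic k | sortedDist dist j < sortedDist dist k} =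
      ({j | sortedDist dist j < sortedDist dist k} : Finset (Fin N)) := by
  ext j
  simp only [mem_filter, mem_Iic, mem_univ, true_and, and_iff_right_iff_imp]
  exact fun h => ((sortedDist_monotone dist).reflect_lt h).le

theorem card_filter_Iic_not_sortedDist_lt (k : Fin N) :
    #{j ∈ Iic k | ¬ sortedDist dist j < sortedDist dist k} + cumSize dist (sortedDist dist k) =
      k + 1 := by
  rw [← card_sortedDist_lt, ← filter_Iic_sortedDist_lt, add_comm,
    card_filter_add_card_filter_not, Fin.card_Iic]

variable {dist} in
theorem sum_filter_sortedDist_lt_ite {σ : Equiv.Perm (Fin N)}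
    (hσ : σ ∈ compatibleRankings dist) (d : ℕ) :
    ∑ j ∈ {j | sortedDist dist j < d}, (if a (σ j) = true then (1 : ℝ) else 0) =
      cumPos dist a d := by
  rw [← mem_compatibleRankings.mp hσ, sum_filter]
  simp only [Function.comp_apply, ← ite_and]
  rw [Equiv.sum_comp σ (fun i => if dist i < d ∧ a i = true then (1 : ℝ) else 0), sum_boole,
    cumPos_eq_card]

theorem sum_compatibleRankings_ite_mul_sum_Iic (k : Fin N) :
    ∑ σ ∈ compatibleRankings dist, (if a (σ k) = true then (1 : ℝ) else 0) *
        ∑ j ∈ Iic k, (if a (σ j) = true then (1 : ℝ) else 0) =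
      #(compatibleRankings dist) *
        ((bucketPos dist a (sortedDist dist k) : ℝ) / bucketSize dist (sortedDist dist k)) *
        (cumPos dist a (sortedDist dist k) + ((k : ℝ) - cumSize dist (sortedDist dist k)) *
          (((bucketPos dist a (sortedDist dist k) : ℝ) - 1) /
            (bucketSize dist (sortedDist dist k) - 1)) + 1) := by
  set d := sortedDist dist k
  set B : Finset (Fin N) := {j ∈ Iic k | ¬ sortedDist dist j < d}
  have hB : ∀ j ∈ B, sortedDist dist j = d := fun j hj =>
    le_antisymm (sortedDist_monotone dist (mem_Iic.mp (mem_filter.mp hj).1))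
      (not_lt.mp (mem_filter.mp hj).2)
  have hkB : k ∈ B := by simp [B, d]
  have split : ∀ σ ∈ compatibleRankings dist,
      (if a (σ k) = true then (1 : ℝ) else 0) *
          ∑ j ∈ Iic k, (if a (σ j) = true then (1 : ℝ) else 0) =
        cumPos dist a d *
            ((if a (σ k) = true then (1 : ℝ) else 0) * (if a (σ k) = true then 1 else 0)) +
          ∑ j ∈ B,
            (if a (σ j) = true then (1 : ℝ) else 0) * (if a (σ k) = true then 1 else 0) := by
    intro σ hσ
    rw [← sum_filter_add_sum_filter_not (Iic k) (fun j => sortedDist dist j < d),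
      filter_Iic_sortedDist_lt, sum_filter_sortedDist_lt_ite a hσ, mul_add, mul_sum]
    cases a (σ k)
    · simp only [Bool.false_eq_true, ↓reduceIte, zero_mul, mul_zero, sum_const_zero, add_zero]
    · simp only [↓reduceIte, one_mul, mul_one]; rfl
  have hcard := card_filter_Iic_not_sortedDist_lt dist k
  rw [sum_congr rfl split, sum_add_distrib, ← mul_sum, sum_comm,
    sum_compatibleRankings_ite_mul_ite dist a rfl,
    sum_congr rfl fun j hj => sum_compatibleRankings_ite_mul_ite dist a (hB j hj), ← mul_sum,
    ← add_sum_erase B _ hkB, sum_congr rfl fun j hj => if_neg (ne_of_mem_erase hj), sum_const,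
    card_erase_of_mem hkB, nsmul_eq_mul, Nat.cast_sub (card_pos.mpr ⟨k, hkB⟩)]
  have hcard' : (#B : ℝ) + cumSize dist d = k + 1 := by exact_mod_cast hcard
  rw [if_pos rfl]
  linear_combination #(compatibleRankings dist) * ((bucketPos dist a d : ℝ) / bucketSize dist d) *
    (((bucketPos dist a d : ℝ) - 1) / (bucketSize dist d - 1)) * hcard'

theorem sum_univ_eq_sum_range_sum_Icc {M : Type*} [AddCommMonoid M] {b : ℕ}
    (hdist : ∀ i, dist i ≤ b) (F : ℕ → ℕ → M) :
    ∑ k : Fin N, F (sortedDist dist k) (k + 1) =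
      ∑ d ∈ range (b + 1),
        ∑ t ∈ Icc (cumSize dist d + 1) (cumSize dist (d + 1)), F d t := by
  rw [← sum_fiberwise_of_maps_to (g := sortedDist dist) (t := range (b + 1))
    fun k _ => mem_range.mpr (Nat.lt_succ_of_le (hdist _))]
  refine sum_congr rfl fun d _ => ?_
  refine sum_bij' (fun k _ => k + 1)
    (fun t ht => ⟨t - 1, by have := cumSize_le dist (d + 1); grind⟩) ?_ ?_ ?_ ?_ ?_
  · intro k hk
    have := (sortedDist_eq_iff dist k d).mp (mem_filter.mp hk).2
    simp only [mem_Icc]; omega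
  · intro t ht
    simp only [mem_Icc] at ht
    simp only [mem_filter, mem_univ, true_and, sortedDist_eq_iff]
    omega
  · intro k _; simp
  · intro t ht; simp only [mem_Icc] at ht; simp only; omega
  · intro k hk; rw [(mem_filter.mp hk).2]

theorem average_AP_eq {b : ℕ} (hdist : ∀ i, dist i ≤ b) :
    (∑ σ ∈ compatibleRankings dist,
        (1 / (#{i | a i = true} : ℝ)) *
          ∑ k : Fin N, (if a (σ k) = true then (1 : ℝ) else 0) *
            ((∑ j ∈ Iic k, (if a (σ j) = true then (1 : ℝ) else 0)) / ((k : ℕ) + 1))) /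
        #(compatibleRankings dist) =
      ∑ d ∈ range (b + 1),
        ((bucketPos dist a d : ℝ) / (bucketSize dist d * #{i | a i = true})) *
          ∑ t ∈ Icc (cumSize dist d + 1) (cumSize dist (d + 1)),
            ((cumPos dist a d : ℝ) +
                ((t : ℝ) - cumSize dist d - 1) * ((bucketPos dist a d : ℝ) - 1) /
                  (bucketSize dist d - 1) + 1) / t := by
  have hC : (#(compatibleRankings dist) : ℝ) ≠ 0 :=
    Nat.cast_ne_zero.mpr (card_ne_zero_of_mem (sort_mem_compatibleRankings dist))
  simp_rw [← mul_div_assoc, ← mul_sum, sum_comm (s := compatibleRankings dist), ← sum_div,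
    sum_compatibleRankings_ite_mul_sum_Iic]
  simp_rw [mul_sum (s := Icc _ _)]
  rw [← sum_univ_eq_sum_range_sum_Icc dist hdist, mul_sum, sum_div]
  refine sum_congr rfl fun k _ => ?_
  rw [div_eq_iff hC]
  push_cast
  ring

end TieAwareAP

theorem tie_aware_AP_general
    (N b : ℕ) (dist : Fin N → ℕ) (hdist : ∀ i, dist i ≤ b)
    (a : Fin N → Bool) :
    let Npos : ℕ := (Finset.univ.filter (fun i : Fin N => a i = true)).card
    let n : ℕ → ℕ := fun d => (Finset.univ.filter (fun i : Fin N => dist i = d)).card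
    let npos : ℕ → ℕ :=
      fun d => (Finset.univ.filter (fun i : Fin N => dist i = d ∧ a i = true)).card
    -- `Ncum d = N_{d-1}` and `Npcum d = N_{d-1}⁺` (sums over distances `j < d`)
    let Ncum : ℕ → ℕ := fun d => ∑ j ∈ Finset.range d, n j
    let Npcum : ℕ → ℕ := fun d => ∑ j ∈ Finset.range d, npos j
    let AP : Equiv.Perm (Fin N) → ℝ := fun σ =>
      (1 / (Npos : ℝ)) * ∑ k : Fin N,
        (if a (σ k) = true then (1 : ℝ) else 0) *
          ((∑ j ∈ Finset.Iic k, (if a (σ j) = true then (1 : ℝ) else 0)) / ((k : ℕ) + 1))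
    let Compat : Finset (Equiv.Perm (Fin N)) :=
      Finset.univ.filter (fun σ : Equiv.Perm (Fin N) => Monotone (fun k => dist (σ k)))
    (∑ σ ∈ Compat, AP σ) / (Compat.card : ℝ) =
      ∑ d ∈ Finset.range (b + 1),
        ((npos d : ℝ) / ((n d : ℝ) * (Npos : ℝ))) *
          ∑ t ∈ Finset.Icc (Ncum d + 1) (Ncum (d + 1)),
            ((Npcum d : ℝ) +
                ((t : ℝ) - (Ncum d : ℝ) - 1) * ((npos d : ℝ) - 1) / ((n d : ℝ) - 1) + 1) /
              (t : ℝ) := by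
  intro Npos n npos Ncum Npcum AP Compat
  exact TieAwareAP.average_AP_eq dist a hdist

/-- **Tie-aware Average Precision.** The average of AP over all rankings compatible with
the integer-valued distances equals the tie-aware closed form. -/
theorem tie_aware_AP
    (N b : ℕ) (hN : 1 ≤ N) (dist : Fin N → ℕ) (hdist : ∀ i, dist i ≤ b)
    (a : Fin N → Bool)
    (hpos : 1 ≤ (Finset.univ.filter (fun i : Fin N => a i = true)).card) :
    let Npos : ℕ := (Finset.univ.filter (fun i : Fin N => a i = true)).card
    let n : ℕ → ℕ := fun d => (Finset.univ.filter (fun i : Fin N => dist i = d)).card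
    let npos : ℕ → ℕ :=
      fun d => (Finset.univ.filter (fun i : Fin N => dist i = d ∧ a i = true)).card
    -- `Ncum d = N_{d-1}` and `Npcum d = N_{d-1}⁺` (sums over distances `j < d`)
    let Ncum : ℕ → ℕ := fun d => ∑ j ∈ Finset.range d, n j
    let Npcum : ℕ → ℕ := fun d => ∑ j ∈ Finset.range d, npos j
    let AP : Equiv.Perm (Fin N) → ℝ := fun σ =>
      (1 / (Npos : ℝ)) * ∑ k : Fin N,
        (if a (σ k) = true then (1 : ℝ) else 0) *
          ((∑ j ∈ Finset.Iic k, (if a (σ j) = true then (1 : ℝ) else 0)) / ((k : ℕ) + 1))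
    let Compat : Finset (Equiv.Perm (Fin N)) :=
      Finset.univ.filter (fun σ : Equiv.Perm (Fin N) => Monotone (fun k => dist (σ k)))
    (∑ σ ∈ Compat, AP σ) / (Compat.card : ℝ) =
      ∑ d ∈ Finset.range (b + 1),
        ((npos d : ℝ) / ((n d : ℝ) * (Npos : ℝ))) *
          ∑ t ∈ Finset.Icc (Ncum d + 1) (Ncum (d + 1)),
            ((Npcum d : ℝ) +
                ((t : ℝ) - (Ncum d : ℝ) - 1) * ((npos d : ℝ) - 1) / ((n d : ℝ) - 1) + 1) /
              (t : ℝ) :=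
  tie_aware_AP_general N b dist hdist a
end

section
/- Let n ≥ 2, let P ⊆ Fin n be a finite subset with |P| = p, and fix a position k : Fin n. Then (1/n!) · ∑_{σ ∈ Equiv.Perm (Fin n)} [σ k ∈ P] · |{ j : Fin n | j < k ∧ σ j ∈ P }| = (p · (p − 1) / (n · (n − 1))) · k.val, as an identity of real numbers, where [·] denotes the 0/1 indicator. -/
/-!
Summing over the earlier positions `j < k`, everything reduces to counting the permutations with
`σ k ∈ P` and `σ j ∈ P` for a fixed pair of positions `j ≠ k`. Since `Perm α` acts
2-transitively, left multiplication shows that the number of `σ` with `(σ k, σ j) = (a, b)` is the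
same for all `a ≠ b`. The count is therefore proportional to the number `p (p - 1)` of such pairs
in `P`, and taking `P = univ` identifies the constant as `n! / (n (n - 1))`.
-/

open Finset
open scoped Nat

theorem Finset.cast_card_offDiag {α R : Type*} [DecidableEq α] [Ring R] (s : Finset α) :
    (#s.offDiag : R) = #s * (#s - 1) := by
  rw [offDiag_card, Nat.cast_sub (Nat.le_mul_self _)]
  push_cast
  rw [mul_sub_one]

namespace Equiv.Perm

variable {α : Type*} [Fintype α] [DecidableEq α]

theorem card_filter_apply_eq_and_apply_eq_congr {i j a b c d : α} (hab : a ≠ b) (hcd : c ≠ d) :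
    #{σ : Perm α | σ i = a ∧ σ j = b} = #{σ : Perm α | σ i = c ∧ σ j = d} := by
  obtain ⟨τ, hτa, hτb⟩ :=
    MulAction.is_two_pretransitive_iff.mp (isMultiplyPretransitive α 2) hab hcd
  rw [← hτa, ← hτb]
  refine card_equiv (Equiv.mulLeft τ) fun σ => ?_
  simp only [mem_filter, mem_univ, true_and, coe_mulLeft, mul_apply, Perm.smul_def,
    EmbeddingLike.apply_eq_iff_eq]

theorem card_filter_apply_mem_and_apply_mem {i j : α} (hij : i ≠ j) (Q : Finset α) :
    #{σ : Perm α | σ i ∈ Q ∧ σ j ∈ Q} = #Q.offDiag * #{σ : Perm α | σ i = i ∧ σ j = j} := by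
  rw [card_eq_sum_card_fiberwise (f := fun σ : Perm α => (σ i, σ j)) (t := Q.offDiag)]
  · rw [← smul_eq_mul, ← sum_const]
    refine sum_congr rfl fun x hx => ?_
    rw [← card_filter_apply_eq_and_apply_eq_congr (mem_offDiag.mp hx).2.2 hij, filter_filter]
    congr 1
    refine filter_congr fun σ _ => ⟨fun h => Prod.ext_iff.mp h.2, fun h => ⟨?_, Prod.ext h.1 h.2⟩⟩
    rw [h.1, h.2]
    exact ⟨(mem_offDiag.mp hx).1, (mem_offDiag.mp hx).2.1⟩
  · intro σ hσ
    simp only [coe_filter, mem_univ, true_and, Set.mem_ofPred_eq] at hσ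
    exact mem_offDiag.mpr ⟨hσ.1, hσ.2, σ.injective.ne hij⟩

theorem cast_card_filter_apply_mem_and_apply_mem {i j : α} (hij : i ≠ j) (Q : Finset α) :
    (#{σ : Perm α | σ i ∈ Q ∧ σ j ∈ Q} : ℝ) =
      #Q * (#Q - 1) / (Fintype.card α * (Fintype.card α - 1)) * (Fintype.card α)! := by
  have hQ := card_filter_apply_mem_and_apply_mem hij Q
  have huniv := card_filter_apply_mem_and_apply_mem hij (univ : Finset α)
  simp only [mem_univ, and_true, filter_true] at huniv
  rw [Finset.card_univ, Fintype.card_perm] at huniv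
  have hpos : (#(univ : Finset α).offDiag : ℝ) ≠ 0 := by
    exact_mod_cast (card_pos.mpr ⟨(i, j), mem_offDiag.mpr ⟨mem_univ _, mem_univ _, hij⟩⟩).ne'
  rw [hQ, huniv]
  push_cast
  rw [← card_univ, ← cast_card_offDiag, ← cast_card_offDiag]
  field_simp

theorem sum_indicator_mul_card_filter {i : α} {S : Finset α} (hi : i ∉ S) (Q : Finset α) :
    ∑ σ : Perm α, (if σ i ∈ Q then (1 : ℝ) else 0) * #{j ∈ S | σ j ∈ Q} =
      #S * (#Q * (#Q - 1) / (Fintype.card α * (Fintype.card α - 1)) * (Fintype.card α)!) := by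
  have hsummand (σ : Perm α) : (if σ i ∈ Q then (1 : ℝ) else 0) * #{j ∈ S | σ j ∈ Q} =
      ∑ j ∈ S, if σ i ∈ Q ∧ σ j ∈ Q then 1 else 0 := by
    by_cases h : σ i ∈ Q <;> simp [h, sum_boole]
  simp_rw [hsummand]
  rw [sum_comm, ← nsmul_eq_mul, ← sum_const]
  refine sum_congr rfl fun j hj => ?_
  rw [sum_boole, cast_card_filter_apply_mem_and_apply_mem (ne_of_mem_of_not_mem hj hi).symm]

end Equiv.Perm

theorem perm_average_indicator_count_general (n : ℕ) (P : Finset (Fin n)) (p : ℕ)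
    (hp : P.card = p) (k : Fin n) :
    (1 / ((Fintype.card (Fin n)).factorial : ℝ)) *
        ∑ σ : Equiv.Perm (Fin n),
          (if σ k ∈ P then (1 : ℝ) else 0) *
            ((Finset.univ.filter (fun j : Fin n => j < k ∧ σ j ∈ P)).card : ℝ) =
      ((p : ℝ) * ((p : ℝ) - 1) / ((n : ℝ) * ((n : ℝ) - 1))) * ((k : ℕ) : ℝ) := by
  have hfilter (σ : Equiv.Perm (Fin n)) :
      ({j | j < k ∧ σ j ∈ P} : Finset (Fin n)) = {j ∈ Iio k | σ j ∈ P} := by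
    ext j
    simp
  simp_rw [hfilter]
  rw [Equiv.Perm.sum_indicator_mul_card_filter (by simp) P, Fin.card_Iio, hp, Fintype.card_fin]
  field_simp

/-- Hypergeometric-type identity: expected product of the indicator that position `k`
holds a positive item and the number of positive items in earlier positions, under a
uniformly random permutation of `n` items of which `p` are positive. -/
theorem perm_average_indicator_count (n : ℕ) (hn : 2 ≤ n) (P : Finset (Fin n)) (p : ℕ)
    (hp : P.card = p) (k : Fin n) :
    (1 / ((Fintype.card (Fin n)).factorial : ℝ)) *
        ∑ σ : Equiv.Perm (Fin n),
          (if σ k ∈ P then (1 : ℝ) else 0) *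
            ((Finset.univ.filter (fun j : Fin n => j < k ∧ σ j ∈ P)).card : ℝ) =
      ((p : ℝ) * ((p : ℝ) - 1) / ((n : ℝ) * ((n : ℝ) - 1))) * ((k : ℕ) : ℝ) :=
  perm_average_indicator_count_general n P p hp k
end

section
/- Let N' ≥ 1 and n ≥ 2 be natural numbers, let P', p be real numbers, and set K = P' + 1 − ((p − 1)/(n − 1)) · (N' + 1). Then | ∑_{t=N'+1}^{N'+n} ( P' + (t − N' − 1) · (p − 1)/(n − 1) + 1 ) / t − ( n · (p − 1)/(n − 1) + K · (Real.log (N' + n) − Real.log N') ) | ≤ |K| · ( 1/N' − 1/(N' + n) ). -/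
/-! Each summand equals `c + K / t` with `c = (p - 1) / (n - 1)`, so the error is `K` times the gap
between the harmonic sum `∑ 1 / t` and `log (N' + n) - log N'`. Termwise,
`1 / (m + 1) ≤ log (m + 1) - log m ≤ 1 / m`, so the gap lies between `0` and the telescoping sum
`∑ (1 / m - 1 / (m + 1)) = 1 / N' - 1 / (N' + n)`. -/

open Finset Real

theorem inv_add_one_le_log_add_one_sub_log {x : ℝ} (hx : 0 < x) :
    1 / (x + 1) ≤ log (x + 1) - log x := by
  have h := one_sub_inv_le_log_of_pos (div_pos (by linarith : 0 < x + 1) hx)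
  rw [log_div (by linarith) hx.ne', inv_div] at h
  calc 1 / (x + 1) = 1 - x / (x + 1) := by field_simp; ring
    _ ≤ _ := h

theorem log_add_one_sub_log_le_inv {x : ℝ} (hx : 0 < x) :
    log (x + 1) - log x ≤ 1 / x := by
  have h := log_le_sub_one_of_pos (div_pos (by linarith : 0 < x + 1) hx)
  rw [log_div (by linarith) hx.ne'] at h
  calc log (x + 1) - log x ≤ (x + 1) / x - 1 := h
    _ = 1 / x := by field_simp; ring

theorem log_add_sub_log_eq_sum_range (x : ℝ) (n : ℕ) :
    log (x + n) - log x = ∑ k ∈ range n, (log (x + k + 1) - log (x + k)) := by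
  simpa [add_assoc] using (sum_range_sub (fun k : ℕ => log (x + k)) n).symm

theorem inv_sub_inv_add_eq_sum_range (x : ℝ) (n : ℕ) :
    1 / x - 1 / (x + n) = ∑ k ∈ range n, (1 / (x + k) - 1 / (x + k + 1)) := by
  simpa [add_assoc] using (sum_range_sub' (fun k : ℕ => 1 / (x + k)) n).symm

theorem abs_sum_range_inv_sub_log_le {x : ℝ} (hx : 0 < x) (n : ℕ) :
    |∑ k ∈ range n, 1 / (x + k + 1) - (log (x + n) - log x)| ≤ 1 / x - 1 / (x + n) := by
  have hxk : ∀ k : ℕ, 0 < x + k := fun k => by positivity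
  rw [abs_le, log_add_sub_log_eq_sum_range, inv_sub_inv_add_eq_sum_range, ← sum_sub_distrib]
  constructor
  · rw [neg_le, ← sum_neg_distrib]
    refine sum_le_sum fun k _ => ?_
    linarith [log_add_one_sub_log_le_inv (hxk k)]
  · refine (sum_nonpos fun k _ => ?_).trans (sum_nonneg fun k _ => ?_)
    · linarith [inv_add_one_le_log_add_one_sub_log (hxk k)]
    · exact sub_nonneg.2 (one_div_le_one_div_of_le (hxk k) (by linarith))

theorem sum_Icc_add_eq_sum_range {M : Type*} [AddCommMonoid M] (f : ℕ → M) (N n : ℕ) :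
    ∑ t ∈ Icc (N + 1) (N + n), f t = ∑ k ∈ range n, f (N + k + 1) := by
  rw [← Ico_add_one_right_eq_Icc, sum_Ico_eq_sum_range]
  simp only [show N + n + 1 - (N + 1) = n by omega]
  exact sum_congr rfl fun k _ => by rw [add_right_comm]

theorem tie_aware_AP_relaxation_error_general (N' n : ℕ) (hN' : 1 ≤ N')
    (P' p K : ℝ) (hK : K = P' + 1 - ((p - 1) / ((n : ℝ) - 1)) * ((N' : ℝ) + 1)) :
    |(∑ t ∈ Finset.Icc (N' + 1) (N' + n),
          (P' + ((t : ℝ) - (N' : ℝ) - 1) * (p - 1) / ((n : ℝ) - 1) + 1) / (t : ℝ)) -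
        ((n : ℝ) * (p - 1) / ((n : ℝ) - 1) +
          K * (Real.log ((N' : ℝ) + (n : ℝ)) - Real.log (N' : ℝ)))| ≤
      |K| * (1 / (N' : ℝ) - 1 / ((N' : ℝ) + (n : ℝ))) := by
  set c := (p - 1) / ((n : ℝ) - 1)
  have hsum : ∑ t ∈ Icc (N' + 1) (N' + n),
      (P' + ((t : ℝ) - N' - 1) * (p - 1) / ((n : ℝ) - 1) + 1) / (t : ℝ) =
        n * c + K * ∑ k ∈ range n, 1 / ((N' : ℝ) + k + 1) := by
    rw [sum_Icc_add_eq_sum_range, mul_sum, show (n : ℝ) * c = ∑ _k ∈ range n, c by simp,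
      ← sum_add_distrib]
    refine sum_congr rfl fun k _ => ?_
    push_cast
    rw [mul_div_assoc, hK]
    field_simp
    ring
  rw [hsum, mul_div_assoc, add_sub_add_left_eq_sub, ← mul_sub, abs_mul]
  exact mul_le_mul_of_nonneg_left (abs_sum_range_inv_sub_log_le (by exact_mod_cast hN') n)
    (abs_nonneg K)

/-- Error bound for the continuous (logarithmic) relaxation of the per-tie contribution
to tie-aware Average Precision. -/
theorem tie_aware_AP_relaxation_error (N' n : ℕ) (hN' : 1 ≤ N') (hn : 2 ≤ n)
    (P' p K : ℝ) (hK : K = P' + 1 - ((p - 1) / ((n : ℝ) - 1)) * ((N' : ℝ) + 1)) :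
    |(∑ t ∈ Finset.Icc (N' + 1) (N' + n),
          (P' + ((t : ℝ) - (N' : ℝ) - 1) * (p - 1) / ((n : ℝ) - 1) + 1) / (t : ℝ)) -
        ((n : ℝ) * (p - 1) / ((n : ℝ) - 1) +
          K * (Real.log ((N' : ℝ) + (n : ℝ)) - Real.log (N' : ℝ)))| ≤
      |K| * (1 / (N' : ℝ) - 1 / ((N' : ℝ) + (n : ℝ))) :=
  tie_aware_AP_relaxation_error_general N' n hN' P' p K hK
end

section
/- The function t ↦ 1 / Real.logb 2 (t + 1) is convex on the open interval Set.Ioi (0 : ℝ), i.e. ConvexOn ℝ (Set.Ioi 0) (fun t => (Real.logb 2 (t + 1))⁻¹). -/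
/-!
`t ↦ log₂ (t + 1)` is concave and positive on `(0, ∞)`, and the reciprocal of a positive concave
function is convex: `t ↦ t⁻¹` is convex and decreasing on `(0, ∞)`, so
`f (a x + b y)⁻¹ ≤ (a f x + b f y)⁻¹ ≤ a (f x)⁻¹ + b (f y)⁻¹`.
-/

open Set Real

theorem ConcaveOn.inv {E : Type*} [AddCommGroup E] [Module ℝ E] {s : Set E} {f : E → ℝ}
    (hf : ConcaveOn ℝ s f) (hf_pos : ∀ x ∈ s, 0 < f x) : ConvexOn ℝ s fun x => (f x)⁻¹ := by
  refine ⟨hf.1, fun x hx y hy a b ha hb hab => ?_⟩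
  have hinv : ConvexOn ℝ (Ioi 0) fun t : ℝ => t⁻¹ := by simpa using convexOn_zpow (𝕜 := ℝ) (-1)
  have hcomb_pos : a • f x + b • f y ∈ Ioi 0 :=
    convex_Ioi 0 (hf_pos x hx) (hf_pos y hy) ha hb hab
  calc (f (a • x + b • y))⁻¹ ≤ (a • f x + b • f y)⁻¹ :=
        inv_anti₀ hcomb_pos (hf.2 hx hy ha hb hab)
    _ ≤ a • (f x)⁻¹ + b • (f y)⁻¹ := hinv.2 (hf_pos x hx) (hf_pos y hy) ha hb hab

theorem concaveOn_logb_Ioi {b : ℝ} (hb : 1 ≤ b) : ConcaveOn ℝ (Ioi 0) (logb b) :=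
  (strictConcaveOn_log_Ioi.concaveOn.smul (inv_nonneg.2 (log_nonneg hb))).congr
    fun _ _ => inv_mul_eq_div _ _

theorem concaveOn_logb_add_one_Ioi {b : ℝ} (hb : 1 ≤ b) :
    ConcaveOn ℝ (Ioi 0) fun t => logb b (t + 1) := by
  refine ((concaveOn_logb_Ioi hb).translate_left 1).subset (fun t ht => ?_) (convex_Ioi 0)
  simp only [mem_preimage, mem_Ioi] at ht ⊢
  linarith

/-- The logarithmic DCG discount `t ↦ 1/log₂(t+1)` is convex on `(0, ∞)`. -/
theorem dcg_discount_convex :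
    ConvexOn ℝ (Set.Ioi (0 : ℝ)) (fun t => (Real.logb 2 (t + 1))⁻¹) :=
  (concaveOn_logb_add_one_Ioi one_le_two).inv fun _ ht =>
    logb_pos one_lt_two (lt_add_of_pos_left 1 ht)
end

section
/- Let a ≥ 0 and n ≥ 1 be natural numbers. Then ∑_{j=1}^{n} 1 / Real.logb 2 ((a : ℝ) + j + 1) ≥ (n : ℝ) / Real.logb 2 ( (a : ℝ) + (n + 1)/2 + 1 ). -/
lemma gauss_Icc (n : ℕ) : ∑ j ∈ Finset.Icc 1 n, (j : ℝ) = n * (n + 1) / 2 := by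
  induction n with
  | zero => simp
  | succ k ih =>
    rw [Finset.sum_Icc_succ_top (by omega)]
    push_cast
    rw [ih]; ring

/-- Jensen lower bound for the per-tie sum of logarithmic DCG discounts, used to define
the simplified surrogate `DCG_s`. -/
theorem dcg_discount_jensen_bound (a n : ℕ) (hn : 1 ≤ n) :
    ∑ j ∈ Finset.Icc 1 n, 1 / Real.logb 2 ((a : ℝ) + (j : ℝ) + 1) ≥
      (n : ℝ) / Real.logb 2 ((a : ℝ) + ((n : ℝ) + 1) / 2 + 1) := by
  set s := Finset.Icc 1 n with hs
  have hnR : (1 : ℝ) ≤ (n : ℝ) := by exact_mod_cast hn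
  have hnpos : (0 : ℝ) < n := lt_of_lt_of_le one_pos hnR
  set m : ℝ := (a : ℝ) + ((n : ℝ) + 1) / 2 + 1 with hm
  have hma : (0 : ℝ) ≤ (a : ℝ) := Nat.cast_nonneg a
  have hm1 : 1 < m := by
    have : (2 : ℝ) ≤ m := by rw [hm]; nlinarith
    linarith
  have hcard : (s.card : ℝ) = n := by
    rw [hs, Nat.card_Icc]; push_cast; ring
  -- the arguments are all ≥ 2
  have hx1 : ∀ j ∈ s, (1 : ℝ) < (a : ℝ) + (j : ℝ) + 1 := by
    intro j hj
    have h1j : 1 ≤ j := (Finset.mem_Icc.mp hj).1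
    have : (1 : ℝ) ≤ (j : ℝ) := by exact_mod_cast h1j
    linarith
  set L : ℕ → ℝ := fun j => Real.logb 2 ((a : ℝ) + (j : ℝ) + 1) with hL
  have hLpos : ∀ j ∈ s, 0 < L j := fun j hj =>
    Real.logb_pos (by norm_num) (hx1 j hj)
  -- sum of arguments equals n * m
  have hsumx : ∑ j ∈ s, ((a : ℝ) + (j : ℝ) + 1) = (n : ℝ) * m := by
    rw [Finset.sum_add_distrib, Finset.sum_add_distrib, gauss_Icc,
      Finset.sum_const, Finset.sum_const, nsmul_eq_mul, nsmul_eq_mul, hcard, hm]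
    ring
  -- Jensen for concave log: ∑ L j ≤ n * logb 2 m
  have hjensen : ∑ j ∈ s, L j ≤ (n : ℝ) * Real.logb 2 m := by
    have hcc : ConcaveOn ℝ (Set.Ioi (0 : ℝ)) Real.log :=
      strictConcaveOn_log_Ioi.concaveOn
    have h₀ : ∀ j ∈ s, (0 : ℝ) ≤ (n : ℝ)⁻¹ := fun _ _ => by positivity
    have h₁ : ∑ _j ∈ s, (n : ℝ)⁻¹ = 1 := by
      rw [Finset.sum_const, nsmul_eq_mul, hcard, mul_inv_cancel₀ (ne_of_gt hnpos)]
    have hmem : ∀ j ∈ s, ((a : ℝ) + (j : ℝ) + 1) ∈ Set.Ioi (0 : ℝ) :=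
      fun j hj => lt_trans one_pos (hx1 j hj)
    have hJ := hcc.le_map_sum h₀ h₁ hmem
    simp only [smul_eq_mul, ← Finset.mul_sum] at hJ
    rw [hsumx, ← mul_assoc, inv_mul_cancel₀ (ne_of_gt hnpos), one_mul] at hJ
    have hlog2 : (0 : ℝ) < Real.log 2 := Real.log_pos (by norm_num)
    have : ∑ j ∈ s, L j = (∑ j ∈ s, Real.log ((a : ℝ) + (j : ℝ) + 1)) / Real.log 2 := by
      rw [Finset.sum_div]
      exact Finset.sum_congr rfl fun j hj => by simp [hL, Real.logb]
    rw [this, ← Real.log_div_log, div_le_iff₀ hlog2, mul_assoc,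
      div_mul_cancel₀ _ (ne_of_gt hlog2)]
    calc (∑ j ∈ s, Real.log ((a : ℝ) + (j : ℝ) + 1))
        = (n : ℝ) * ((n : ℝ)⁻¹ * ∑ j ∈ s, Real.log ((a : ℝ) + (j : ℝ) + 1)) := by
          rw [← mul_assoc, mul_inv_cancel₀ (ne_of_gt hnpos), one_mul]
      _ ≤ (n : ℝ) * Real.log m := by
          exact mul_le_mul_of_nonneg_left hJ (le_of_lt hnpos)
  have hsumLpos : 0 < ∑ j ∈ s, L j := by
    apply Finset.sum_pos hLpos
    exact ⟨1, Finset.mem_Icc.mpr ⟨le_refl 1, hn⟩⟩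
  -- Sedrakyan / AM-HM: n^2 / ∑ L ≤ ∑ 1/L
  have hsed := Finset.sq_sum_div_le_sum_sq_div s (fun _ => (1 : ℝ)) hLpos
  rw [Finset.sum_const, nsmul_eq_mul, mul_one, hcard] at hsed
  simp only [one_pow] at hsed
  have hMpos : 0 < Real.logb 2 m := Real.logb_pos (by norm_num) hm1
  calc (n : ℝ) / Real.logb 2 m
      = (n : ℝ) ^ 2 / ((n : ℝ) * Real.logb 2 m) := by
        rw [sq, mul_comm (n : ℝ) (Real.logb 2 m), ← div_div,
          mul_div_assoc, mul_div_cancel_left₀ _ (ne_of_gt hnpos)]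
    _ ≤ (n : ℝ) ^ 2 / ∑ j ∈ s, L j := by
        apply div_le_div_of_nonneg_left (by positivity) hsumLpos hjensen
    _ ≤ ∑ j ∈ s, 1 / L j := hsed
end
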